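/- arXiv:2301.12083 — 2 statements merged into one kernel-verified Lean document; each statement's English description precedes it below -/
import Mathlib

section
/- For any nonnegative real numbers a_1, ..., a_n, the sum over i of a_i / sqrt(sum over j ≤ i of a_j) is at most 2 * sqrt(sum over i of a_i), where terms with zero denominator are interpreted as 0. -/
open Finset Real

/-- Concavity of `√`: weighting the increment `x` by `1 / √(s + x)` gives at most twice the
increment of `√`, so the sum in the theorem telescopes. -/
lemma div_sqrt_add_le_two_mul_sqrt_sub {s x : ℝ} (hs : 0 ≤ s) (hx : 0 ≤ x) :
    x / √(s + x) ≤ 2 * (√(s + x) - √s) := by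
  rcases (add_nonneg hs hx).eq_or_lt with h | h
  · have hx0 : x = 0 := by linarith
    simp [hx0]
  · have hpos : 0 < √(s + x) := sqrt_pos.2 h
    have hmono : √s ≤ √(s + x) := sqrt_le_sqrt (by linarith)
    rw [div_le_iff₀ hpos]
    nlinarith [sq_sqrt hs, sq_sqrt h.le, sqrt_nonneg s]

theorem stmt_0 (n : ℕ) (a : Fin n → ℝ) (ha : ∀ i, 0 ≤ a i) :
    ∑ i, a i / Real.sqrt (∑ j ∈ Finset.Iic i, a j) ≤
      2 * Real.sqrt (∑ i, a i) := by
  induction n with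
  | zero => simp
  | succ n ih =>
    have hprefix := ih (fun i => a i.castSucc) (fun i => ha _)
    have hlast := div_sqrt_add_le_two_mul_sqrt_sub
      (sum_nonneg fun i (_ : i ∈ univ) => ha (Fin.castSucc i)) (ha (Fin.last n))
    simp only [Fin.sum_univ_castSucc, Fin.sum_Iic_castSucc, ← Fin.top_eq_last,
      Iic_top] at hprefix hlast ⊢
    linarith
end

section
/- Let J ~ Geom(1/2) with P(J = j) = 2^{-j}, let j_max ≥ 1, and let (X_j) be random vectors in ℝ^d with ‖X_j‖ ≤ G almost surely for all j. Suppose there is a constant V ≥ 0 such that E[‖X_j − μ‖²] ≤ V/2^j for all 0 ≤ j ≤ j_max and some fixed vector μ with ‖μ‖ ≤ G. Define X = X_0 + 2^J (X_J − X_{J−1}) if J ≤ j_max, and X = X_0 otherwise, with J independent of (X_j). Then E[‖X‖²] ≤ 2G² + 8·j_max·V. -/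
/-!
Write `Δⱼ = Xⱼ - Xⱼ₋₁`. As `J` is independent of `(X₀, …, X_jmax)` and `P(J = j) = 2⁻ʲ`,
the weight `2⁻ʲ` cancels one factor `2ʲ` after expanding `‖X₀ + 2ʲ Δⱼ‖²`:
`E‖X‖² = E‖X₀‖² + ∑ⱼ (2 E⟪X₀, Δⱼ⟫ + 2ʲ E‖Δⱼ‖²)`. The cross terms telescope to
`2 E⟪X₀, X_jmax - X₀⟫`, and `‖X₀‖² + 2⟪X₀, X_jmax - X₀⟫ ≤ ‖X_jmax‖² ≤ G²`, while
`2ʲ E‖Δⱼ‖² ≤ 2ʲ (2V/2ʲ + 2V/2ʲ⁻¹) = 6V`. Hence in fact `E‖X‖² ≤ G² + 6 jmax V`.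
-/

open MeasureTheory ProbabilityTheory Finset

theorem sum_Icc_sub_pred {M : Type*} [AddCommGroup M] (f : ℕ → M) (n : ℕ) :
    ∑ j ∈ Icc 1 n, (f j - f (j - 1)) = f n - f 0 := by
  induction n with
  | zero => simp
  | succ n ih =>
    rw [sum_Icc_succ_top (by omega), ih, Nat.add_sub_cancel]
    abel

theorem norm_sub_sq_le_two_mul_add {F : Type*} [SeminormedAddGroup F] (a b m : F) :
    ‖a - b‖ ^ 2 ≤ 2 * ‖a - m‖ ^ 2 + 2 * ‖b - m‖ ^ 2 := by
  have h := norm_sub_le_norm_sub_add_norm_sub a m b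
  rw [norm_sub_rev m b] at h
  nlinarith [add_sq_le (a := ‖a - m‖) (b := ‖b - m‖), norm_nonneg (a - b)]

section

variable {Ω : Type*} [MeasurableSpace Ω] {μ : Measure Ω}

section NormedAddCommGroup

variable {F : Type*} [NormedAddCommGroup F]

theorem integral_norm_sub_sq_le [IsFiniteMeasure μ] {f g : Ω → F} (hf : MemLp f 2 μ)
    (hg : MemLp g 2 μ) (m : F) :
    ∫ ω, ‖f ω - g ω‖ ^ 2 ∂μ ≤ 2 * ∫ ω, ‖f ω - m‖ ^ 2 ∂μ + 2 * ∫ ω, ‖g ω - m‖ ^ 2 ∂μ := by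
  have hfm : Integrable (fun ω => ‖f ω - m‖ ^ 2) μ :=
    (hf.sub (memLp_const m)).integrable_norm_pow two_ne_zero
  have hgm : Integrable (fun ω => ‖g ω - m‖ ^ 2) μ :=
    (hg.sub (memLp_const m)).integrable_norm_pow two_ne_zero
  rw [← integral_const_mul, ← integral_const_mul,
    ← integral_add (hfm.const_mul _) (hgm.const_mul _)]
  exact integral_mono ((hf.sub hg).integrable_norm_pow two_ne_zero)
    ((hfm.const_mul _).add (hgm.const_mul _)) fun ω => norm_sub_sq_le_two_mul_add _ _ m

theorem two_pow_succ_mul_integral_norm_sub_sq_le [IsFiniteMeasure μ] {f g : Ω → F}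
    (hf : MemLp f 2 μ) (hg : MemLp g 2 μ) (m : F) {V : ℝ} {k : ℕ}
    (hfm : ∫ ω, ‖f ω - m‖ ^ 2 ∂μ ≤ V / 2 ^ (k + 1)) (hgm : ∫ ω, ‖g ω - m‖ ^ 2 ∂μ ≤ V / 2 ^ k) :
    (2 : ℝ) ^ (k + 1) * ∫ ω, ‖f ω - g ω‖ ^ 2 ∂μ ≤ 6 * V := by
  calc (2 : ℝ) ^ (k + 1) * ∫ ω, ‖f ω - g ω‖ ^ 2 ∂μ
      ≤ 2 ^ (k + 1) * (2 * (V / 2 ^ (k + 1)) + 2 * (V / 2 ^ k)) := by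
        gcongr
        linarith [integral_norm_sub_sq_le hf hg m]
    _ = 6 * V := by
        field_simp
        ring

theorem integrable_norm_add_smul_sq_sub_norm_sq [NormedSpace ℝ F] {f g : Ω → F} (hf : MemLp f 2 μ)
    (hg : MemLp g 2 μ) (c : ℝ) :
    Integrable (fun ω => ‖f ω + c • g ω‖ ^ 2 - ‖f ω‖ ^ 2) μ :=
  ((hf.add (hg.const_smul c)).integrable_norm_pow two_ne_zero).sub
    (hf.integrable_norm_pow two_ne_zero)

end NormedAddCommGroup

section InnerProductSpace

variable {E : Type*} [NormedAddCommGroup E] [InnerProductSpace ℝ E]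

-- For `k = 0` the selected term is `c 0 • (x 0 - x 0) = 0`, since `0 - 1 = 0` in `ℕ`.
theorem norm_add_ite_smul_sq_eq (x : ℕ → E) (c : ℕ → ℝ) (n k : ℕ) :
    ‖x 0 + (if k ≤ n then c k • (x k - x (k - 1)) else 0)‖ ^ 2 =
      ‖x 0‖ ^ 2 + ∑ j ∈ Icc 1 n,
        if k = j then ‖x 0 + c j • (x j - x (j - 1))‖ ^ 2 - ‖x 0‖ ^ 2 else 0 := by
  rw [sum_ite_eq]
  rcases Nat.eq_zero_or_pos k with rfl | hk
  · simp
  · by_cases hkn : k ≤ n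
    · simp [hkn, Nat.one_le_iff_ne_zero.2 hk.ne']
    · simp [hkn]

theorem mul_norm_add_smul_sq_sub_norm_sq {p c : ℝ} (hpc : p * c = 1) (a b : E) :
    p * (‖a + c • b‖ ^ 2 - ‖a‖ ^ 2) = 2 * inner ℝ a b + c * ‖b‖ ^ 2 := by
  rw [norm_add_sq_real, inner_smul_right, norm_smul, mul_pow, Real.norm_eq_abs, sq_abs]
  linear_combination (2 * inner ℝ a b + c * ‖b‖ ^ 2) * hpc

theorem norm_sq_add_sum_mul_le (x : ℕ → E) {p c : ℕ → ℝ} (n : ℕ)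
    (hpc : ∀ j ∈ Icc 1 n, p j * c j = 1) :
    ‖x 0‖ ^ 2 + ∑ j ∈ Icc 1 n, p j * (‖x 0 + c j • (x j - x (j - 1))‖ ^ 2 - ‖x 0‖ ^ 2) ≤
      ‖x n‖ ^ 2 + ∑ j ∈ Icc 1 n, c j * ‖x j - x (j - 1)‖ ^ 2 := by
  rw [sum_congr rfl fun j hj => mul_norm_add_smul_sq_sub_norm_sq (hpc j hj) _ _,
    sum_add_distrib, ← mul_sum, ← inner_sum, sum_Icc_sub_pred, inner_sub_right,
    real_inner_self_eq_norm_sq, real_inner_comm]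
  nlinarith [norm_sub_sq_real (x n) (x 0), sq_nonneg ‖x n - x 0‖]

theorem integral_norm_sq_add_sum_mul_le {X : ℕ → Ω → E} (hX : ∀ j, MemLp (X j) 2 μ)
    {p c : ℕ → ℝ} (n : ℕ) (hpc : ∀ j ∈ Icc 1 n, p j * c j = 1) :
    ∫ ω, ‖X 0 ω‖ ^ 2 ∂μ + ∑ j ∈ Icc 1 n, p j *
        ∫ ω, (‖X 0 ω + c j • (X j ω - X (j - 1) ω)‖ ^ 2 - ‖X 0 ω‖ ^ 2) ∂μ ≤
      ∫ ω, ‖X n ω‖ ^ 2 ∂μ + ∑ j ∈ Icc 1 n, c j * ∫ ω, ‖X j ω - X (j - 1) ω‖ ^ 2 ∂μ := by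
  have hsq : ∀ {f : Ω → E}, MemLp f 2 μ → Integrable (fun ω => ‖f ω‖ ^ 2) μ :=
    fun hf => hf.integrable_norm_pow two_ne_zero
  have hZ : ∀ j, Integrable (fun ω => p j *
      (‖X 0 ω + c j • (X j ω - X (j - 1) ω)‖ ^ 2 - ‖X 0 ω‖ ^ 2)) μ := fun j =>
    (integrable_norm_add_smul_sq_sub_norm_sq (hX 0) ((hX j).sub (hX (j - 1))) (c j)).const_mul _
  have hD : ∀ j, Integrable (fun ω => c j * ‖X j ω - X (j - 1) ω‖ ^ 2) μ := fun j =>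
    (hsq ((hX j).sub (hX (j - 1)))).const_mul _
  simp_rw [← integral_const_mul]
  rw [← integral_finsetSum _ fun j _ => hZ j, ← integral_finsetSum _ fun j _ => hD j,
    ← integral_add (hsq (hX 0)) (integrable_finsetSum _ fun j _ => hZ j),
    ← integral_add (hsq (hX n)) (integrable_finsetSum _ fun j _ => hD j)]
  exact integral_mono ((hsq (hX 0)).add (integrable_finsetSum _ fun j _ => hZ j))
    ((hsq (hX n)).add (integrable_finsetSum _ fun j _ => hD j))
    fun ω => norm_sq_add_sum_mul_le (fun j => X j ω) n hpc

variable [MeasurableSpace E] [BorelSpace E] [SecondCountableTopology E]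

theorem integral_norm_sq_add_ite_eq {J : Ω → ℕ} (hJ : Measurable J) {n : ℕ}
    {X : ℕ → Ω → E} (hX : ∀ j, MemLp (X j) 2 μ)
    (hind : IndepFun J (fun ω (i : Fin (n + 1)) => X i ω) μ) (c : ℕ → ℝ) :
    ∫ ω, ‖X 0 ω + (if J ω ≤ n then c (J ω) • (X (J ω) ω - X (J ω - 1) ω) else 0)‖ ^ 2 ∂μ =
      ∫ ω, ‖X 0 ω‖ ^ 2 ∂μ + ∑ j ∈ Icc 1 n, μ.real (J ⁻¹' {j}) *
        ∫ ω, (‖X 0 ω + c j • (X j ω - X (j - 1) ω)‖ ^ 2 - ‖X 0 ω‖ ^ 2) ∂μ := by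
  set Z : ℕ → Ω → ℝ := fun j ω => ‖X 0 ω + c j • (X j ω - X (j - 1) ω)‖ ^ 2 - ‖X 0 ω‖ ^ 2
  have hite : ∀ j, (fun ω => if J ω = j then Z j ω else 0) = (J ⁻¹' {j}).indicator (Z j) := by
    intro j; ext ω
    by_cases h : J ω = j <;> simp [h]
  have hint : ∀ j, Integrable (fun ω => if J ω = j then Z j ω else 0) μ := fun j =>
    hite j ▸ (integrable_norm_add_smul_sq_sub_norm_sq (hX 0) ((hX j).sub (hX (j - 1)))
      (c j)).indicator (hJ (measurableSet_singleton j))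
  have hsel : ∀ j ∈ Icc 1 n, ∫ ω, (if J ω = j then Z j ω else 0) ∂μ =
      μ.real (J ⁻¹' {j}) * ∫ ω, Z j ω ∂μ := by
    intro j hj
    have hjn : j ≤ n := (mem_Icc.1 hj).2
    rw [hite, integral_indicator (hJ (measurableSet_singleton j))]
    -- `Z j` is a continuous function of the tuple `(X 0, …, X n)`, which is independent of `J`.
    exact Indep.setIntegral_eq_mul (f := fun w : Fin (n + 1) → E =>
        ‖w ⟨0, by omega⟩ + c j • (w ⟨j, by omega⟩ - w ⟨j - 1, by omega⟩)‖ ^ 2 -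
          ‖w ⟨0, by omega⟩‖ ^ 2)
      hJ.comap_le hind (aemeasurable_pi_lambda _ fun i => (hX i).aestronglyMeasurable.aemeasurable)
      ⟨{j}, measurableSet_singleton j, rfl⟩ (by fun_prop : Continuous _).aestronglyMeasurable
  rw [integral_congr_ae (Filter.Eventually.of_forall fun ω =>
      norm_add_ite_smul_sq_eq (fun j => X j ω) c n (J ω)),
    integral_add ((hX 0).integrable_norm_pow two_ne_zero)
      (integrable_finsetSum _ fun j _ => hint j),
    integral_finsetSum _ fun j _ => hint j, sum_congr rfl hsel]

end InnerProductSpace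

end

theorem stmt_6_general {Ω : Type*} [MeasurableSpace Ω] (μ : Measure Ω) [IsProbabilityMeasure μ]
    {d : ℕ} (J : Ω → ℕ) (hJmeas : Measurable J)
    (hJdist : ∀ j : ℕ, 1 ≤ j → μ {ω | J ω = j} = ENNReal.ofReal ((2 : ℝ)⁻¹ ^ j))
    (jmax : ℕ)
    (X : ℕ → Ω → EuclideanSpace ℝ (Fin d))
    (hXmeas : ∀ j, Measurable (X j))
    (G : ℝ) (hXbd : ∀ j ω, ‖X j ω‖ ≤ G)
    (V : ℝ) (hV : 0 ≤ V) (μvec : EuclideanSpace ℝ (Fin d))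
    (hvar : ∀ j : ℕ, j ≤ jmax → ∫ ω, ‖X j ω - μvec‖ ^ 2 ∂μ ≤ V / 2 ^ j)
    (hindep : IndepFun J (fun ω => fun j : Fin (jmax + 1) => X j ω) μ) :
    ∫ ω, ‖X 0 ω +
        (if J ω ≤ jmax then (2 : ℝ) ^ (J ω) • (X (J ω) ω - X (J ω - 1) ω) else 0)‖ ^ 2 ∂μ
      ≤ 2 * G ^ 2 + 8 * jmax * V := by
  have hL2 : ∀ j, MemLp (X j) 2 μ := fun j =>
    .of_bound (hXmeas j).aestronglyMeasurable G (ae_of_all _ (hXbd j))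
  have hlaw : ∀ j ∈ Icc 1 jmax, μ.real (J ⁻¹' {j}) * 2 ^ j = 1 := by
    intro j hj
    change (μ {ω | J ω = j}).toReal * _ = 1
    rw [hJdist j (mem_Icc.1 hj).1, ENNReal.toReal_ofReal (by positivity), ← mul_pow]
    norm_num
  have hlast : ∫ ω, ‖X jmax ω‖ ^ 2 ∂μ ≤ G ^ 2 :=
    (integral_mono ((hL2 jmax).integrable_norm_pow two_ne_zero) (integrable_const (G ^ 2))
      fun ω => pow_le_pow_left₀ (norm_nonneg _) (hXbd jmax ω) 2).trans_eq (by simp)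
  have hincr : ∀ j ∈ Icc 1 jmax, (2 : ℝ) ^ j * ∫ ω, ‖X j ω - X (j - 1) ω‖ ^ 2 ∂μ ≤ 6 * V := by
    intro j hj
    obtain ⟨k, rfl⟩ : ∃ k, j = k + 1 := ⟨j - 1, by grind⟩
    exact two_pow_succ_mul_integral_norm_sub_sq_le (hL2 _) (hL2 k) μvec
      (hvar _ (mem_Icc.1 hj).2) (hvar k (by grind))
  rw [integral_norm_sq_add_ite_eq hJmeas hL2 hindep]
  calc _ ≤ ∫ ω, ‖X jmax ω‖ ^ 2 ∂μ +
        ∑ j ∈ Icc 1 jmax, (2 : ℝ) ^ j * ∫ ω, ‖X j ω - X (j - 1) ω‖ ^ 2 ∂μ :=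
        integral_norm_sq_add_sum_mul_le hL2 jmax hlaw
    _ ≤ G ^ 2 + ∑ _j ∈ Icc 1 jmax, 6 * V := add_le_add hlast (sum_le_sum hincr)
    _ ≤ 2 * G ^ 2 + 8 * jmax * V := by
      simp only [sum_const, Nat.card_Icc, Nat.add_sub_cancel, nsmul_eq_mul]
      nlinarith [sq_nonneg G, mul_nonneg (Nat.cast_nonneg jmax) hV]

theorem stmt_6 {Ω : Type*} [MeasurableSpace Ω] (μ : Measure Ω) [IsProbabilityMeasure μ]
    {d : ℕ} (J : Ω → ℕ) (hJmeas : Measurable J) (hJ1 : ∀ ω, 1 ≤ J ω)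
    (hJdist : ∀ j : ℕ, 1 ≤ j → μ {ω | J ω = j} = ENNReal.ofReal ((2 : ℝ)⁻¹ ^ j))
    (jmax : ℕ) (hjmax : 1 ≤ jmax)
    (X : ℕ → Ω → EuclideanSpace ℝ (Fin d))
    (hXmeas : ∀ j, Measurable (X j))
    (G : ℝ) (hG : 0 ≤ G) (hXbd : ∀ j ω, ‖X j ω‖ ≤ G)
    (V : ℝ) (hV : 0 ≤ V) (μvec : EuclideanSpace ℝ (Fin d)) (hμvec : ‖μvec‖ ≤ G)
    (hvar : ∀ j : ℕ, j ≤ jmax → ∫ ω, ‖X j ω - μvec‖ ^ 2 ∂μ ≤ V / 2 ^ j)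
    (hindep : IndepFun J (fun ω => fun j : Fin (jmax + 1) => X j ω) μ) :
    ∫ ω, ‖X 0 ω +
        (if J ω ≤ jmax then (2 : ℝ) ^ (J ω) • (X (J ω) ω - X (J ω - 1) ω) else 0)‖ ^ 2 ∂μ
      ≤ 2 * G ^ 2 + 8 * jmax * V :=
  stmt_6_general μ J hJmeas hJdist jmax X hXmeas G hXbd V hV μvec hvar hindep
end
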